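/- Let A be a strictly positive operator on H and T ∈ B_A(H). Then w_A(T)³ ≤ (1/4)w_A(T³) + (1/4)w_A(T²T^{♯A} + T^{♯A}T² + TT^{♯A}T). -/

import Mathlib

noncomputable section
open Complex ContinuousLinearMap

variable {H : Type*} [NormedAddCommGroup H] [InnerProductSpace ℂ H] [CompleteSpace H]

/-- The `A`-inner product `⟨x,y⟩_A = ⟨Ax,y⟩`. -/
def innA (A : H →L[ℂ] H) (x y : H) : ℂ := inner ℂ (A x) y

/-- The `A`-seminorm of a vector, `‖x‖_A = √⟨x,x⟩_A`. -/
def vnormA (A : H →L[ℂ] H) (x : H) : ℝ := Real.sqrt (innA A x x).re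

/-- The `A`-numerical radius `w_A(T) = sup{|⟨Tx,x⟩_A| : ‖x‖_A = 1}`. -/
def wA (A T : H →L[ℂ] H) : ℝ :=
  sSup {r : ℝ | ∃ x : H, vnormA A x = 1 ∧ r = ‖innA A (T x) x‖}

/-- The `A`-operator seminorm, `sup` over `A`-unit vectors in the closure of the range of `A`. -/
def opNormA (A T : H →L[ℂ] H) : ℝ :=
  sSup {r : ℝ | ∃ x : H, x ∈ closure (Set.range A) ∧ vnormA A x = 1 ∧ r = vnormA A (T x)}

/-- The `A`-operator seminorm, `sup` over all `A`-unit vectors (used when `A > 0`). -/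
def opNormA' (A T : H →L[ℂ] H) : ℝ :=
  sSup {r : ℝ | ∃ x : H, vnormA A x = 1 ∧ r = vnormA A (T x)}

/-- The `A`-Crawford number `c_A(T) = inf{|⟨Tx,x⟩_A| : ‖x‖_A = 1}`. -/
def cA (A T : H →L[ℂ] H) : ℝ :=
  sInf {r : ℝ | ∃ x : H, vnormA A x = 1 ∧ r = ‖innA A (T x) x‖}

/-- The `A`-minimum modulus `m_A(T) = inf{‖Tx‖_A : ‖x‖_A = 1}` (version for `A > 0`). -/
def mA (A T : H →L[ℂ] H) : ℝ :=
  sInf {r : ℝ | ∃ x : H, vnormA A x = 1 ∧ r = vnormA A (T x)}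

/-- `S` is an `A`-adjoint of `T`, i.e. `A S = T* A`. -/
def IsAAdjoint (A T S : H →L[ℂ] H) : Prop :=
  A.comp S = (ContinuousLinearMap.adjoint T).comp A

/-- `A` is strictly positive: positive and `⟨Ax,x⟩ > 0` for all `x ≠ 0`. -/
def StrictPos (A : H →L[ℂ] H) : Prop :=
  A.IsPositive ∧ ∀ x : H, x ≠ 0 → 0 < (innA A x x).re

/-- The inner product on `H ⊕ H`. -/
def inn2 (u v : H × H) : ℂ := inner ℂ u.1 v.1 + inner ℂ u.2 v.2

/-- `B = diag(A, A)` acting on `H ⊕ H`. -/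
def Bop (A : H →L[ℂ] H) : H × H →L[ℂ] H × H := A.prodMap A

/-- The `B`-seminorm on `H ⊕ H`. -/
def vnormB (A : H →L[ℂ] H) (u : H × H) : ℝ := Real.sqrt (inn2 (Bop A u) u).re

/-- The `B`-numerical radius on `H ⊕ H`, where `B = diag(A, A)`. -/
def wB (A : H →L[ℂ] H) (S : H × H →L[ℂ] H × H) : ℝ :=
  sSup {r : ℝ | ∃ u : H × H, vnormB A u = 1 ∧ r = ‖inn2 (Bop A (S u)) u‖}

/-- The `2 × 2` operator matrix `[[X, Y], [Z, W]]` acting on `H ⊕ H`. -/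
def blk (X Y Z W : H →L[ℂ] H) : H × H →L[ℂ] H × H :=
  ((X.comp (ContinuousLinearMap.fst ℂ H H)) + (Y.comp (ContinuousLinearMap.snd ℂ H H))).prod
    ((Z.comp (ContinuousLinearMap.fst ℂ H H)) + (W.comp (ContinuousLinearMap.snd ℂ H H)))

/-! Fix an `A`-unit vector `x` and let `c` be the phase of `⟨T x, x⟩_A`. Then `R = c T + c̄ S` is
`A`-self-adjoint and `⟨R x, x⟩_A = 2 |⟨T x, x⟩_A|`. For an `A`-self-adjoint operator a bound on
the numerical range also bounds the `A`-seminorm (polarization), and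
`‖R x‖_A⁴ ≤ ‖R² x‖_A² ≤ ‖R³ x‖_A ‖R x‖_A` gives `‖R x‖_A³ ≤ w_A(R³)`. Expanding
`R³ = c³ T³ + c̄³ S³ + c P + c̄ P'`, where `P = T² S + S T² + T S T` and `P'` is its `A`-adjoint,
gives `w_A(R³) ≤ 2 w_A(T³) + 2 w_A(P)`, hence `8 |⟨T x, x⟩_A|³ ≤ 2 w_A(T³) + 2 w_A(P)`.

The numerical ranges of `T³` and `P` are bounded, so `w_A(T³)` and `w_A(P)` are not junk values,
because `‖T‖_A ≤ 2 w_A(T)`; this follows from the self-adjoint case through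
`2 T = (T + S) - i (i T - i S)`. If the `A`-numerical range of `T` is unbounded, `w_A(T)` is the
junk value `0` and the inequality is trivial.
-/

open ComplexConjugate

lemma smul_add_smul_pow_three {R B : Type*} [CommRing R] [Ring B] [Algebra R B] (a b : R)
    (X Y : B) :
    (a • X + b • Y) ^ 3 = a ^ 3 • X ^ 3 + b ^ 3 • Y ^ 3
      + (a ^ 2 * b) • (X ^ 2 * Y + Y * X ^ 2 + X * Y * X)
      + (a * b ^ 2) • (X * Y ^ 2 + Y ^ 2 * X + Y * X * Y) := by
  simp only [pow_succ, pow_zero, one_mul, mul_add, add_mul, smul_add, smul_mul_assoc,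
    mul_smul_comm, smul_smul, mul_assoc]
  match_scalars <;> ring

variable {A R T S U V : H →L[ℂ] H} {u p v w : ℝ}

section Form

omit [CompleteSpace H]
variable (A)

@[simp] lemma innA_add_left (x x' y : H) : innA A (x + x') y = innA A x y + innA A x' y := by
  simp [innA]

@[simp] lemma innA_sub_left (x x' y : H) : innA A (x - x') y = innA A x y - innA A x' y := by
  simp [innA]

@[simp] lemma innA_add_right (x y y' : H) : innA A x (y + y') = innA A x y + innA A x y' := by
  simp [innA]

@[simp] lemma innA_sub_right (x y y' : H) : innA A x (y - y') = innA A x y - innA A x y' := by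
  simp [innA]

@[simp] lemma innA_smul_left (c : ℂ) (x y : H) : innA A (c • x) y = conj c * innA A x y := by
  simp [innA, mul_comm]

@[simp] lemma innA_smul_right (c : ℂ) (x y : H) : innA A x (c • y) = c * innA A x y := by
  simp [innA]

lemma vnormA_nonneg (x : H) : 0 ≤ vnormA A x := Real.sqrt_nonneg _

lemma vnormA_smul (c : ℂ) (x : H) : vnormA A (c • x) = ‖c‖ * vnormA A x := by
  have h : (innA A (c • x) (c • x)).re = ‖c‖ ^ 2 * (innA A x x).re := by
    rw [innA_smul_left, innA_smul_right, ← mul_assoc, Complex.conj_mul']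
    exact_mod_cast Complex.re_ofReal_mul _ _
  rw [vnormA, vnormA, h, Real.sqrt_mul (sq_nonneg _), Real.sqrt_sq (norm_nonneg _)]

end Form

section Positive

variable (hA : A.IsPositive)
include hA

lemma innA_eq_inner_sqrt (x y : H) :
    innA A x y = inner ℂ (CFC.sqrt A x) (CFC.sqrt A y) := by
  have hQ : (CFC.sqrt A).IsPositive :=
    (ContinuousLinearMap.nonneg_iff_isPositive _).1 (CFC.sqrt_nonneg A)
  have hx : CFC.sqrt A (CFC.sqrt A x) = A x := DFunLike.congr_fun
    (CFC.sqrt_mul_sqrt_self A ((ContinuousLinearMap.nonneg_iff_isPositive A).2 hA)) x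
  rw [innA, ← hx, hQ.inner_left_eq_inner_right]

lemma vnormA_eq_norm_sqrt (x : H) : vnormA A x = ‖CFC.sqrt A x‖ := by
  rw [vnormA, innA_eq_inner_sqrt hA, inner_self_eq_norm_sq_to_K]
  norm_cast
  exact Real.sqrt_sq (norm_nonneg _)

lemma innA_self (x : H) : innA A x x = ((vnormA A x ^ 2 : ℝ) : ℂ) := by
  rw [innA_eq_inner_sqrt hA, vnormA_eq_norm_sqrt hA, inner_self_eq_norm_sq_to_K]
  norm_cast

lemma norm_innA_le (x y : H) : ‖innA A x y‖ ≤ vnormA A x * vnormA A y := by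
  rw [innA_eq_inner_sqrt hA, vnormA_eq_norm_sqrt hA, vnormA_eq_norm_sqrt hA]
  exact norm_inner_le_norm _ _

lemma vnormA_add_le (x y : H) : vnormA A (x + y) ≤ vnormA A x + vnormA A y := by
  simp only [vnormA_eq_norm_sqrt hA, map_add]
  exact norm_add_le _ _

lemma vnormA_add_sq_add_vnormA_sub_sq (x y : H) :
    vnormA A (x + y) ^ 2 + vnormA A (x - y) ^ 2 = 2 * (vnormA A x ^ 2 + vnormA A y ^ 2) := by
  simp only [vnormA_eq_norm_sqrt hA, map_add, map_sub]
  exact parallelogram_law_with_norm ℂ _ _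

end Positive

lemma innA_conj_symm (hA : IsSelfAdjoint A) (x y : H) : conj (innA A y x) = innA A x y := by
  rw [innA, innA, inner_conj_symm]
  exact (hA.isSymmetric x y).symm

namespace IsAAdjoint

lemma innA_apply (hA : IsSelfAdjoint A) (h : IsAAdjoint A T S) (x y : H) :
    innA A (T x) y = innA A x (S y) := by
  have hAS : A (S y) = adjoint T (A y) := DFunLike.congr_fun h y
  calc innA A (T x) y = inner ℂ (T x) (A y) := hA.isSymmetric _ _
    _ = inner ℂ x (A (S y)) := by rw [hAS, adjoint_inner_right]
    _ = innA A x (S y) := (hA.isSymmetric _ _).symm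

lemma symm (hA : IsSelfAdjoint A) (h : IsAAdjoint A T S) : IsAAdjoint A S T := by
  have h' := congrArg adjoint h
  rw [adjoint_comp, adjoint_comp, adjoint_adjoint, hA.adjoint_eq] at h'
  exact h'.symm

lemma mul (h₁ : IsAAdjoint A T S) (h₂ : IsAAdjoint A U V) : IsAAdjoint A (T * U) (V * S) := by
  calc A.comp (V * S) = (A.comp V).comp S := rfl
    _ = (adjoint U).comp (A.comp S) := by rw [h₂]; rfl
    _ = (adjoint (T * U)).comp A := by rw [h₁, mul_def, adjoint_comp]; rfl

lemma add (h₁ : IsAAdjoint A T S) (h₂ : IsAAdjoint A U V) : IsAAdjoint A (T + U) (S + V) := by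
  rw [IsAAdjoint, comp_add, h₁, h₂, map_add, add_comp]

lemma smul (h : IsAAdjoint A T S) (c : ℂ) : IsAAdjoint A (c • T) (conj c • S) := by
  rw [IsAAdjoint, comp_smul, h, map_smulₛₗ, smul_comp]

lemma pow (h : IsAAdjoint A T S) (n : ℕ) : IsAAdjoint A (T ^ n) (S ^ n) := by
  induction n with
  | zero => simp [IsAAdjoint, pow_zero, one_def, adjoint_id]
  | succ n ih => rw [pow_succ, pow_succ']; exact ih.mul h

lemma norm_innA_apply_eq (hA : IsSelfAdjoint A) (h : IsAAdjoint A T S) (x : H) :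
    ‖innA A (S x) x‖ = ‖innA A (T x) x‖ := by
  rw [← innA_conj_symm hA, ← h.innA_apply hA, Complex.norm_conj]

lemma isAAdjoint_smul_add_conj_smul (hA : IsSelfAdjoint A) (h : IsAAdjoint A T S) (c : ℂ) :
    IsAAdjoint A (c • T + conj c • S) (c • T + conj c • S) := by
  convert (h.smul c).add ((h.symm hA).smul (conj c)) using 1
  rw [Complex.conj_conj, add_comm]

lemma mixed_cube (hA : IsSelfAdjoint A) (h : IsAAdjoint A T S) :
    IsAAdjoint A (T ^ 2 * S + S * T ^ 2 + T * S * T) (T * S ^ 2 + S ^ 2 * T + S * T * S) := by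
  have h' := h.symm hA
  simpa only [mul_assoc] using
    (((h.pow 2).mul h').add (h'.mul (h.pow 2))).add ((h.mul h').mul h)

end IsAAdjoint

section Positive

variable (hA : A.IsPositive)
include hA

namespace IsAAdjoint

lemma vnormA_apply_sq_le (h : IsAAdjoint A T S) (x : H) :
    vnormA A (T x) ^ 2 ≤ vnormA A (S (T x)) * vnormA A x := by
  calc vnormA A (T x) ^ 2 = (innA A (T x) (T x)).re := by rw [innA_self hA, Complex.ofReal_re]
    _ = (innA A x (S (T x))).re := by rw [h.innA_apply hA.isSelfAdjoint]
    _ ≤ ‖innA A x (S (T x))‖ := Complex.re_le_norm _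
    _ ≤ vnormA A (S (T x)) * vnormA A x := by rw [mul_comm]; exact norm_innA_le hA _ _

lemma two_mul_re_innA_le (hR : IsAAdjoint A R R)
    (hw : ∀ x, ‖innA A (R x) x‖ ≤ w * vnormA A x ^ 2) (x y : H) :
    2 * (innA A (R x) y).re ≤ w * (vnormA A x ^ 2 + vnormA A y ^ 2) := by
  have hsa := hA.isSelfAdjoint
  have hexp : innA A (R (x + y)) (x + y) - innA A (R (x - y)) (x - y)
      = 2 * (innA A (R x) y + conj (innA A (R x) y)) := by
    rw [innA_conj_symm hsa, ← hR.innA_apply hsa]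
    simp only [map_add, map_sub, innA_add_left, innA_sub_left, innA_add_right, innA_sub_right]
    ring
  have hre : 4 * (innA A (R x) y).re
      = (innA A (R (x + y)) (x + y)).re - (innA A (R (x - y)) (x - y)).re := by
    rw [← Complex.sub_re, hexp]
    simp only [Complex.mul_re, Complex.add_re, Complex.add_im, Complex.conj_re, Complex.conj_im]
    norm_num
    ring
  have hadd := (Complex.re_le_norm _).trans (hw (x + y))
  have hsub := ((neg_le_abs _).trans (Complex.abs_re_le_norm _)).trans (hw (x - y))
  have hpar := congrArg (w * ·) (vnormA_add_sq_add_vnormA_sub_sq hA x y)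
  linarith

lemma vnormA_apply_le (hR : IsAAdjoint A R R)
    (hw : ∀ x, ‖innA A (R x) x‖ ≤ w * vnormA A x ^ 2) (x : H) :
    vnormA A (R x) ≤ w * vnormA A x := by
  rcases (vnormA_nonneg A x).eq_or_lt with hx | hx
  · have hsq := hR.vnormA_apply_sq_le hA x
    rw [← hx, mul_zero] at hsq ⊢
    exact (pow_eq_zero_iff two_ne_zero |>.1 (le_antisymm hsq (sq_nonneg _))).le
  have hw0 : 0 ≤ w := nonneg_of_mul_nonneg_left ((norm_nonneg _).trans (hw x)) (by positivity)
  rcases (vnormA_nonneg A (R x)).eq_or_lt with hRx | hRx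
  · rw [← hRx]
    positivity
  -- test the polarization bound against `y = (‖x‖_A / ‖R x‖_A) • R x`, which has `‖y‖_A = ‖x‖_A`
  have key := hR.two_mul_re_innA_le hA hw x (((vnormA A x / vnormA A (R x) : ℝ) : ℂ) • R x)
  rw [innA_smul_right, innA_self hA, vnormA_smul, ← Complex.ofReal_mul, Complex.ofReal_re,
    Complex.norm_real, Real.norm_of_nonneg (by positivity), div_mul_cancel₀ _ hRx.ne',
    div_mul_eq_mul_div, pow_two, ← mul_assoc, mul_div_cancel_right₀ _ hRx.ne'] at key
  nlinarith

lemma vnormA_apply_le_two_mul (h : IsAAdjoint A T S)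
    (hw : ∀ x, ‖innA A (T x) x‖ ≤ w * vnormA A x ^ 2) (x : H) :
    vnormA A (T x) ≤ 2 * w * vnormA A x := by
  have hsa := hA.isSelfAdjoint
  have hrot : ∀ c : ℂ, ‖c‖ = 1 → vnormA A ((c • T + conj c • S) x) ≤ 2 * w * vnormA A x := by
    intro c hc
    refine (h.isAAdjoint_smul_add_conj_smul hsa c).vnormA_apply_le hA (fun y => ?_) x
    calc ‖innA A ((c • T + conj c • S) y) y‖
        ≤ ‖conj c * innA A (T y) y‖ + ‖conj (conj c) * innA A (S y) y‖ := by
          rw [add_apply, smul_apply, smul_apply, innA_add_left, innA_smul_left, innA_smul_left]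
          exact norm_add_le _ _
      _ = 2 * ‖innA A (T y) y‖ := by
          simp only [norm_mul, Complex.norm_conj, hc, h.norm_innA_apply_eq hsa]
          ring
      _ ≤ 2 * w * vnormA A y ^ 2 := by linarith [hw y]
  have hT : (2 : ℂ) • T x
      = ((1 : ℂ) • T + conj (1 : ℂ) • S) x + (-I) • (I • T + conj I • S) x := by
    simp only [map_one, add_apply, smul_apply, one_smul, Complex.conj_I, smul_add, smul_smul,
      neg_mul, mul_neg, Complex.I_mul_I, neg_neg]
    module
  have htri :=
    vnormA_add_le hA (((1 : ℂ) • T + conj (1 : ℂ) • S) x) ((-I) • (I • T + conj I • S) x)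
  rw [← hT, vnormA_smul, vnormA_smul, norm_neg, Complex.norm_I, Complex.norm_two] at htri
  linarith [hrot 1 norm_one, hrot I Complex.norm_I]

lemma vnormA_apply_pow_three_le (hR : IsAAdjoint A R R)
    (hv : ∀ y, ‖innA A ((R ^ 3) y) y‖ ≤ v * vnormA A y ^ 2) (x : H) :
    vnormA A (R x) ^ 3 ≤ v * vnormA A x ^ 3 := by
  have h₃ : vnormA A (R (R (R x))) ≤ v * vnormA A x := (hR.pow 3).vnormA_apply_le hA hv x
  have h₁ := hR.vnormA_apply_sq_le hA x
  have h₂ := hR.vnormA_apply_sq_le hA (R x)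
  rcases (vnormA_nonneg A (R x)).eq_or_lt with hRx | hRx
  · rw [← hRx]
    nlinarith [mul_nonneg ((vnormA_nonneg A _).trans h₃) (sq_nonneg (vnormA A x))]
  -- `‖R x‖⁴ ≤ ‖R² x‖² ‖x‖² ≤ ‖R³ x‖ ‖R x‖ ‖x‖²`
  have h₄ : vnormA A (R x) * vnormA A (R x) ^ 3 ≤ vnormA A (R x) * (v * vnormA A x ^ 3) := by
    nlinarith [mul_le_mul_of_nonneg_right h₂ (sq_nonneg (vnormA A x)),
      mul_le_mul_of_nonneg_right h₃ (mul_nonneg hRx.le (sq_nonneg (vnormA A x))),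
      pow_le_pow_left₀ (sq_nonneg _) h₁ 2]
  exact le_of_mul_le_mul_left h₄ hRx

end IsAAdjoint

end Positive

/-- The paper's `B_{A^{1/2}}(H)`: operators bounded for the seminorm `‖·‖_A`. -/
def IsABounded (A T : H →L[ℂ] H) : Prop :=
  ∃ c, ∀ x, vnormA A (T x) ≤ c * vnormA A x

namespace IsABounded

section Algebra

omit [CompleteSpace H]

lemma mul (hT : IsABounded A T) (hU : IsABounded A U) : IsABounded A (T * U) := by
  obtain ⟨c, hc⟩ := hT
  obtain ⟨d, hd⟩ := hU
  refine ⟨max c 0 * d, fun x => ?_⟩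
  calc vnormA A (T (U x)) ≤ max c 0 * vnormA A (U x) :=
        (hc _).trans (mul_le_mul_of_nonneg_right (le_max_left _ _) (vnormA_nonneg A _))
    _ ≤ max c 0 * (d * vnormA A x) := mul_le_mul_of_nonneg_left (hd x) (le_max_right _ _)
    _ = max c 0 * d * vnormA A x := by ring

lemma pow (hT : IsABounded A T) (n : ℕ) : IsABounded A (T ^ n) := by
  induction n with
  | zero => exact ⟨1, fun x => by simp⟩
  | succ n ih => rw [pow_succ]; exact ih.mul hT

end Algebra

lemma add (hA : A.IsPositive) (hT : IsABounded A T) (hU : IsABounded A U) :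
    IsABounded A (T + U) := by
  obtain ⟨c, hc⟩ := hT
  obtain ⟨d, hd⟩ := hU
  refine ⟨c + d, fun x => (vnormA_add_le hA _ _).trans ?_⟩
  rw [add_mul]
  exact add_le_add (hc x) (hd x)

end IsABounded

section NumericalRadius

omit [CompleteSpace H]

variable (A T) in
lemma wA_nonneg : 0 ≤ wA A T :=
  Real.sSup_nonneg (by rintro _ ⟨x, -, rfl⟩; exact norm_nonneg _)

lemma wA_pow_le {n : ℕ} {c : ℝ} (hn : n ≠ 0) (hc : 0 ≤ c)
    (h : ∀ x, vnormA A x = 1 → ‖innA A (T x) x‖ ^ n ≤ c) : wA A T ^ n ≤ c := by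
  have hroot : wA A T ≤ c ^ (n⁻¹ : ℝ) := by
    refine Real.sSup_le ?_ (by positivity)
    rintro _ ⟨x, hx, rfl⟩
    rw [← pow_le_pow_iff_left₀ (norm_nonneg _) (by positivity) hn,
      Real.rpow_inv_natCast_pow hc hn]
    exact h x hx
  calc wA A T ^ n ≤ (c ^ (n⁻¹ : ℝ)) ^ n := pow_le_pow_left₀ (wA_nonneg A T) hroot n
    _ = c := Real.rpow_inv_natCast_pow hc hn

lemma wA_eq_zero_of_unbounded (h : ¬∃ c, ∀ x, vnormA A x = 1 → ‖innA A (T x) x‖ ≤ c) :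
    wA A T = 0 :=
  Real.sSup_of_not_bddAbove fun ⟨c, hc⟩ => h ⟨c, fun x hx => hc ⟨x, hx, rfl⟩⟩

end NumericalRadius

section Positive

variable (hA : A.IsPositive)
include hA

lemma norm_innA_le_mul_vnormA_sq {c : ℝ} (h : ∀ x, vnormA A x = 1 → ‖innA A (T x) x‖ ≤ c)
    (x : H) : ‖innA A (T x) x‖ ≤ c * vnormA A x ^ 2 := by
  rcases (vnormA_nonneg A x).eq_or_lt with hx | hx
  · have := norm_innA_le hA (T x) x
    rw [← hx, mul_zero] at this
    rw [← hx]
    simpa using this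
  set t : ℝ := (vnormA A x)⁻¹
  have ht : 0 < t := inv_pos.2 hx
  have hxt : vnormA A x * t = 1 := mul_inv_cancel₀ hx.ne'
  have hunit : vnormA A ((t : ℂ) • x) = 1 := by
    rw [vnormA_smul, Complex.norm_real, Real.norm_of_nonneg ht.le, mul_comm, hxt]
  have hscale : ‖innA A (T ((t : ℂ) • x)) ((t : ℂ) • x)‖ = t ^ 2 * ‖innA A (T x) x‖ := by
    rw [map_smul, innA_smul_left, innA_smul_right, Complex.conj_ofReal, norm_mul, norm_mul,
      Complex.norm_real, Real.norm_of_nonneg ht.le]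
    ring
  have := h _ hunit
  rw [hscale] at this
  calc ‖innA A (T x) x‖ = (vnormA A x) ^ 2 * (t ^ 2 * ‖innA A (T x) x‖) := by
        rw [← mul_assoc, ← mul_pow, hxt, one_pow, one_mul]
    _ ≤ c * vnormA A x ^ 2 := by nlinarith [sq_nonneg (vnormA A x)]

lemma IsABounded.norm_innA_le_wA (hT : IsABounded A T) (x : H) :
    ‖innA A (T x) x‖ ≤ wA A T * vnormA A x ^ 2 := by
  obtain ⟨c, hc⟩ := hT
  have hbdd : BddAbove {r : ℝ | ∃ x : H, vnormA A x = 1 ∧ r = ‖innA A (T x) x‖} := by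
    refine ⟨c, ?_⟩
    rintro _ ⟨y, hy, rfl⟩
    simpa [hy] using (norm_innA_le hA (T y) y).trans
      (mul_le_mul_of_nonneg_right (hc y) (vnormA_nonneg A y))
  exact norm_innA_le_mul_vnormA_sq hA (fun y hy => le_csSup hbdd ⟨y, hy, rfl⟩) x

end Positive

namespace IsAAdjoint

variable (hA : A.IsPositive)
include hA

lemma norm_innA_smul_add_conj_smul_pow_three_le (h : IsAAdjoint A T S) {c : ℂ} (hc : ‖c‖ = 1)
    (hu : ∀ y, ‖innA A ((T ^ 3) y) y‖ ≤ u * vnormA A y ^ 2)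
    (hp : ∀ y, ‖innA A ((T ^ 2 * S + S * T ^ 2 + T * S * T) y) y‖ ≤ p * vnormA A y ^ 2)
    (y : H) :
    ‖innA A (((c • T + conj c • S) ^ 3) y) y‖ ≤ (2 * u + 2 * p) * vnormA A y ^ 2 := by
  have hsa := hA.isSelfAdjoint
  have hP := h.mixed_cube hsa
  rw [smul_add_smul_pow_three]
  set P := T ^ 2 * S + S * T ^ 2 + T * S * T
  set P' := T * S ^ 2 + S ^ 2 * T + S * T * S
  clear_value P P'
  simp only [add_apply, smul_apply, innA_add_left, innA_smul_left]
  refine norm_add₄_le.trans ?_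
  simp only [norm_mul, Complex.norm_conj, norm_pow, hc, one_pow, one_mul,
    (h.pow 3).norm_innA_apply_eq hsa, hP.norm_innA_apply_eq hsa]
  linarith [hu y, hp y]

lemma four_mul_norm_innA_pow_three_le (h : IsAAdjoint A T S)
    (hu : ∀ y, ‖innA A ((T ^ 3) y) y‖ ≤ u * vnormA A y ^ 2)
    (hp : ∀ y, ‖innA A ((T ^ 2 * S + S * T ^ 2 + T * S * T) y) y‖ ≤ p * vnormA A y ^ 2)
    {x : H} (hx : vnormA A x = 1) :
    4 * ‖innA A (T x) x‖ ^ 3 ≤ u + p := by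
  have hsa := hA.isSelfAdjoint
  set z := innA A (T x) x
  set c : ℂ := exp (arg z * I)
  have hc : ‖c‖ = 1 := Complex.norm_exp_ofReal_mul_I _
  have hcz : conj c * z = ‖z‖ := by
    conv_lhs => rw [← Complex.norm_mul_exp_arg_mul_I z]
    rw [mul_left_comm, Complex.conj_mul', hc, Complex.ofReal_one, one_pow, mul_one]
  have hSx : innA A (S x) x = conj z := by rw [← innA_conj_symm hsa, ← h.innA_apply hsa]
  have hRx : innA A ((c • T + conj c • S) x) x = 2 * ‖z‖ := by
    have hcz' : c * conj z = ‖z‖ := by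
      rw [← Complex.conj_conj c, ← map_mul, hcz, Complex.conj_ofReal]
    rw [add_apply, smul_apply, smul_apply, innA_add_left, innA_smul_left, innA_smul_left, hSx,
      Complex.conj_conj, hcz, hcz']
    ring
  have h2z : 2 * ‖z‖ ≤ vnormA A ((c • T + conj c • S) x) := by
    have := norm_innA_le hA ((c • T + conj c • S) x) x
    rwa [hRx, hx, mul_one, norm_mul, Complex.norm_two, Complex.norm_real, norm_norm] at this
  have hR3 := (h.isAAdjoint_smul_add_conj_smul hsa c).vnormA_apply_pow_three_le hA
    (h.norm_innA_smul_add_conj_smul_pow_three_le hA hc hu hp) x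
  rw [hx] at hR3
  nlinarith [pow_le_pow_left₀ (by positivity) h2z 3]

end IsAAdjoint

theorem stmt13 (A T S : H →L[ℂ] H) (hA : StrictPos A) (hS : IsAAdjoint A T S) :
    (wA A T)^3 ≤ (1/4) * wA A (T^3) + (1/4) * wA A (T^2 * S + S * T^2 + T * S * T) := by
  have hpos := hA.1
  have hsa := hpos.isSelfAdjoint
  have hu := wA_nonneg A (T ^ 3)
  have hp := wA_nonneg A (T ^ 2 * S + S * T ^ 2 + T * S * T)
  by_cases hT : ∃ c, ∀ x, vnormA A x = 1 → ‖innA A (T x) x‖ ≤ c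
  swap
  · rw [wA_eq_zero_of_unbounded hT]
    linarith
  obtain ⟨c, hc⟩ := hT
  have hTc := norm_innA_le_mul_vnormA_sq hpos hc
  have hTb : IsABounded A T := ⟨2 * c, hS.vnormA_apply_le_two_mul hpos hTc⟩
  have hSb : IsABounded A S := ⟨2 * c, (hS.symm hsa).vnormA_apply_le_two_mul hpos
    fun x => (hS.norm_innA_apply_eq hsa x).trans_le (hTc x)⟩
  have hPb : IsABounded A (T ^ 2 * S + S * T ^ 2 + T * S * T) :=
    ((((hTb.pow 2).mul hSb).add hpos (hSb.mul (hTb.pow 2))).add hpos ((hTb.mul hSb).mul hTb))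
  refine wA_pow_le three_ne_zero (by positivity) fun x hx => ?_
  have := hS.four_mul_norm_innA_pow_three_le hpos ((hTb.pow 3).norm_innA_le_wA hpos)
    (hPb.norm_innA_le_wA hpos) hx
  linarith
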